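/- Define the double-difference rows dΔ^j = Δ^{j+1} − Δ^j (termwise) for 0 ≤ j ≤ k−3, and the sum row Σ = Δ^0 + Δ^1 + ⋯ + Δ^{k−2} (termwise), where Δ^j = X^{j+1} − X^j are the difference rows of the k-bonacci positions table (k ≥ 3). Then the value sets of dΔ^0, …, dΔ^{k−3} and Σ form a partition of the positive integers. -/
import Mathlib


/-- The k-bonacci substitution on the alphabet {0,…,k−1}. -/
def subW (k : ℕ) (w : List ℕ) : List ℕ :=
  w.flatMap (fun j => if j + 1 < k then [0, j + 1] else [0])

/-- The k-bonacci word (0-indexed). -/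
def kbonacci (k n : ℕ) : ℕ := ((subW k)^[n + 1] [0]).getD n 0

/-- X^j_n: the 1-based position of the n-th (1-based) occurrence of letter j. -/
noncomputable def Xpos (k j n : ℕ) : ℕ :=
  Nat.nth (fun m => kbonacci k m = j) (n - 1) + 1

/-- Δ^j_n = X^{j+1}_n − X^j_n. -/
noncomputable def Δrow (k j n : ℕ) : ℕ := Xpos k (j + 1) n - Xpos k j n

/-- dΔ^j_n = Δ^{j+1}_n − Δ^j_n, the double-difference rows. -/
noncomputable def dΔrow (k j n : ℕ) : ℕ := Δrow k (j + 1) n - Δrow k j n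

/-- Σ_n = Δ^0_n + ⋯ + Δ^{k−2}_n, the sum row. -/
noncomputable def sumRow (k n : ℕ) : ℕ := ∑ j ∈ Finset.range (k - 1), Δrow k j n

namespace KB

/-- the prefix of length m of the k-bonacci word, as a list -/
def pre (k m : ℕ) : List ℕ := (List.range m).map (kbonacci k)

/-- iterated substitution words -/
def Wl (k m : ℕ) : List ℕ := (subW k)^[m] [0]

/-- image length of the length-m prefix -/
def phi (k m : ℕ) : ℕ := (subW k (pre k m)).length

theorem subW_append (k : ℕ) (a b : List ℕ) :
    subW k (a ++ b) = subW k a ++ subW k b := by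
  simp [subW]

theorem Wl_succ (k m : ℕ) : Wl k (m + 1) = subW k (Wl k m) := by
  simp [Wl, Function.iterate_succ_apply']

theorem subW_prefix (k : ℕ) {u v : List ℕ} (h : u <+: v) :
    subW k u <+: subW k v := by
  obtain ⟨t, rfl⟩ := h
  exact ⟨subW k t, (subW_append k u t).symm⟩

theorem Wl_step (k : ℕ) (hk : 3 ≤ k) (m : ℕ) : Wl k m <+: Wl k (m + 1) := by
  induction m with
  | zero =>
    rw [Wl_succ]
    show [0] <+: subW k [0]
    simp only [subW, List.flatMap_cons, List.flatMap_nil]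
    have : 0 + 1 < k := by omega
    simp [this]
  | succ m ih =>
    rw [Wl_succ, Wl_succ k (m+1)]
    exact subW_prefix k ih

theorem Wl_chain (k : ℕ) (hk : 3 ≤ k) {m M : ℕ} (h : m ≤ M) :
    Wl k m <+: Wl k M := by
  induction M, h using Nat.le_induction with
  | base => exact List.prefix_refl _
  | succ M hM ih => exact ih.trans (Wl_step k hk M)

theorem pre_zero (k : ℕ) : pre k 0 = [] := by simp [pre]

theorem pre_succ (k m : ℕ) : pre k (m + 1) = pre k m ++ [kbonacci k m] := by
  simp [pre, List.range_succ]

theorem phi_zero (k : ℕ) : phi k 0 = 0 := by simp [phi, pre_zero, subW]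

theorem phi_succ (k m : ℕ) :
    phi k (m + 1) = phi k m + (if kbonacci k m + 1 < k then 2 else 1) := by
  simp only [phi, pre_succ, subW_append, List.length_append]
  congr 1
  by_cases h : kbonacci k m + 1 < k <;> simp [subW, h]


theorem zero_mem_Wl (k : ℕ) (hk : 3 ≤ k) (m : ℕ) : 0 ∈ Wl k m := by
  have h := Wl_chain k hk (Nat.zero_le m)
  have : (0:ℕ) ∈ Wl k 0 := by simp [Wl]
  exact h.subset this

theorem length_subW_ge (k : ℕ) (w : List ℕ) : w.length ≤ (subW k w).length := by
  induction w with
  | nil => simp [subW]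
  | cons a t ih =>
    have : subW k (a :: t) = (if a + 1 < k then [0, a+1] else [0]) ++ subW k t := by
      simp [subW]
    rw [this, List.length_append]
    by_cases h : a + 1 < k <;> simp [h] <;> omega

theorem length_subW_gt (k : ℕ) (hk : 3 ≤ k) {w : List ℕ} (h0 : 0 ∈ w) :
    w.length + 1 ≤ (subW k w).length := by
  induction w with
  | nil => simp at h0
  | cons a t ih =>
    have he : subW k (a :: t) = (if a + 1 < k then [0, a+1] else [0]) ++ subW k t := by
      simp [subW]
    have ht := length_subW_ge k t
    rcases List.mem_cons.mp h0 with rfl | h0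
    · have : 0 + 1 < k := by omega
      rw [he]; simp [this]; omega
    · have := ih h0
      rw [he, List.length_append]
      by_cases h : a + 1 < k <;> simp [h] <;> omega

theorem Wl_length (k : ℕ) (hk : 3 ≤ k) (m : ℕ) : m + 1 ≤ (Wl k m).length := by
  induction m with
  | zero => simp [Wl]
  | succ m ih =>
    rw [Wl_succ]
    have := length_subW_gt k hk (zero_mem_Wl k hk m)
    omega

theorem Wl_getElem (k : ℕ) (hk : 3 ≤ k) (M i : ℕ) (h : i < (Wl k M).length) :
    (Wl k M)[i] = kbonacci k i := by
  have hi : i < (Wl k (i+1)).length := by have := Wl_length k hk (i+1); omega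
  have hkb : kbonacci k i = (Wl k (i+1))[i] := by
    show ((subW k)^[i+1] [0]).getD i 0 = _
    exact List.getD_eq_getElem _ _ hi
  rcases le_total M (i+1) with hle | hle
  · exact ((Wl_chain k hk hle).getElem h).trans hkb.symm
  · rw [hkb]; exact ((Wl_chain k hk hle).getElem hi).symm ▸ rfl

theorem pre_length (k m : ℕ) : (pre k m).length = m := by simp [pre]

theorem pre_getElem (k m i : ℕ) (h : i < (pre k m).length) :
    (pre k m)[i] = kbonacci k i := by simp [pre]

theorem pre_eq_take (k : ℕ) (hk : 3 ≤ k) {m M : ℕ} (h : m ≤ (Wl k M).length) :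
    pre k m = (Wl k M).take m := by
  apply List.ext_getElem
  · simp [pre_length]; omega
  · intro i h1 h2
    simp only [List.length_take, lt_min_iff] at h2
    rw [pre_getElem, List.getElem_take]
    exact (Wl_getElem k hk M i (by omega)).symm

theorem subW_pre (k : ℕ) (hk : 3 ≤ k) (m : ℕ) :
    subW k (pre k m) = pre k (phi k m) := by
  have hm : m ≤ (Wl k m).length := by have := Wl_length k hk m; omega
  have h1 : pre k m = (Wl k m).take m := pre_eq_take k hk hm
  have hpref : subW k (pre k m) <+: Wl k (m+1) := by
    rw [Wl_succ, h1]
    exact subW_prefix k (List.take_prefix m _)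
  have hlen : (subW k (pre k m)).length = phi k m := rfl
  have h2 := List.prefix_iff_eq_take.mp hpref
  rw [h2, hlen]
  exact (pre_eq_take k hk (by rw [← hlen]; exact hpref.length_le)).symm


theorem phi_succ_decomp (k : ℕ) (hk : 3 ≤ k) (m : ℕ) :
    pre k (phi k (m+1)) =
      subW k (pre k m) ++ (if kbonacci k m + 1 < k then [0, kbonacci k m + 1] else [0]) := by
  rw [← subW_pre k hk, pre_succ, subW_append]
  congr 1
  simp [subW]

theorem kb_phi (k : ℕ) (hk : 3 ≤ k) (m : ℕ) : kbonacci k (phi k m) = 0 := by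
  have hd := phi_succ_decomp k hk m
  have hlen : (subW k (pre k m)).length = phi k m := rfl
  have hlt : phi k m < (pre k (phi k (m+1))).length := by
    rw [hd, List.length_append, hlen]
    by_cases h : kbonacci k m + 1 < k <;> simp [h]
  have := pre_getElem k (phi k (m+1)) (phi k m) hlt
  rw [← this, List.getElem_of_eq hd]
  rw [List.getElem_append_right (by omega)]
  by_cases h : kbonacci k m + 1 < k <;> simp [h, hlen]

theorem kb_phi_succ (k : ℕ) (hk : 3 ≤ k) {m : ℕ} (h : kbonacci k m + 1 < k) :
    kbonacci k (phi k m + 1) = kbonacci k m + 1 := by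
  have hd := phi_succ_decomp k hk m
  have hlen : (subW k (pre k m)).length = phi k m := rfl
  have hlt : phi k m + 1 < (pre k (phi k (m+1))).length := by
    rw [hd, List.length_append, hlen]; simp [h]
  have := pre_getElem k (phi k (m+1)) (phi k m + 1) hlt
  rw [← this, List.getElem_of_eq hd]
  rw [List.getElem_append_right (by omega)]
  simp [h, hlen]

theorem phi_strictMono (k : ℕ) : StrictMono (phi k) := by
  apply strictMono_nat_of_lt_succ
  intro m
  rw [phi_succ]
  by_cases h : kbonacci k m + 1 < k <;> simp [h]

theorem exists_block (k : ℕ) (p : ℕ) :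
    ∃ m, phi k m ≤ p ∧ p < phi k (m + 1) := by
  induction p with
  | zero =>
    refine ⟨0, by simp [phi_zero], ?_⟩
    have := phi_strictMono k (show 0 < 0 + 1 from Nat.lt_succ_self 0)
    rw [phi_zero] at this
    omega
  | succ p ih =>
    obtain ⟨m, h1, h2⟩ := ih
    by_cases h : p + 1 < phi k (m + 1)
    · exact ⟨m, by omega, h⟩
    · refine ⟨m + 1, by omega, ?_⟩
      have h3 : phi k (m+1) = p + 1 := by omega
      have := phi_strictMono k (show m + 1 < m + 1 + 1 from Nat.lt_succ_self (m+1))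
      omega

theorem classify (k : ℕ) (p : ℕ) :
    (∃ m, p = phi k m) ∨ (∃ m, kbonacci k m + 1 < k ∧ p = phi k m + 1) := by
  obtain ⟨m, h1, h2⟩ := exists_block k p
  rw [phi_succ] at h2
  by_cases h : kbonacci k m + 1 < k
  · simp only [h, if_true] at h2
    rcases (by omega : p = phi k m ∨ p = phi k m + 1) with h' | h'
    · exact Or.inl ⟨m, h'⟩
    · exact Or.inr ⟨m, h, h'⟩
  · simp only [h, if_false] at h2
    exact Or.inl ⟨m, by omega⟩

theorem kb_lt (k : ℕ) (hk : 3 ≤ k) (n : ℕ) : kbonacci k n < k := by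
  have hmem : ∀ M, ∀ x ∈ Wl k M, x < k := by
    intro M
    induction M with
    | zero => intro x hx; simp [Wl] at hx; omega
    | succ M ih =>
      intro x hx
      rw [Wl_succ] at hx
      simp only [subW, List.mem_flatMap] at hx
      obtain ⟨a, ha, hxa⟩ := hx
      by_cases h : a + 1 < k
      · simp [h] at hxa
        rcases hxa with rfl | rfl <;> omega
      · simp [h] at hxa; omega
  have hlen : n < (Wl k (n+1)).length := by have := Wl_length k hk (n+1); omega
  have := Wl_getElem k hk (n+1) n hlen
  rw [← this]
  exact hmem (n+1) _ (List.getElem_mem hlen)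

theorem kb_zero (k : ℕ) (hk : 3 ≤ k) : kbonacci k 0 = 0 := by
  have := kb_phi k hk 0
  rwa [phi_zero] at this


instance instDecEq (k j : ℕ) : DecidablePred (fun i => kbonacci k i = j) :=
  fun _ => Nat.decEq _ _

instance instDecNe (k : ℕ) : DecidablePred (fun i => kbonacci k i ≠ k - 2) :=
  fun _ => instDecidableNot

/-- count of letter j among positions 0..m-1 -/
noncomputable abbrev cnt (k j m : ℕ) : ℕ := Nat.count (fun i => kbonacci k i = j) m

theorem cnt_succ (k j m : ℕ) :
    cnt k j (m + 1) = cnt k j m + if kbonacci k m = j then 1 else 0 :=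
  Nat.count_succ _ _

theorem cnt_le (k j m : ℕ) : cnt k j m ≤ m := Nat.count_le _

theorem cnt_zero_phi (k : ℕ) (hk : 3 ≤ k) (m : ℕ) : cnt k 0 (phi k m) = m := by
  induction m with
  | zero => rw [phi_zero]; simp [cnt]
  | succ m ih =>
    rw [phi_succ]
    by_cases h : kbonacci k m + 1 < k
    · simp only [h, if_true]
      rw [show phi k m + 2 = phi k m + 1 + 1 from rfl]
      rw [cnt_succ, cnt_succ, ih]
      have h0 := kb_phi k hk m
      have h1 := kb_phi_succ k hk h
      simp [h0, h1]
    · simp only [h, if_false]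
      rw [cnt_succ, ih]
      simp [kb_phi k hk m]

theorem cnt_succ_phi (k : ℕ) (hk : 3 ≤ k) {j : ℕ} (hj : j ≠ k - 1) (m : ℕ) :
    cnt k (j + 1) (phi k m) = cnt k j m := by
  induction m with
  | zero => rw [phi_zero]; simp [cnt]
  | succ m ih =>
    rw [phi_succ, cnt_succ]
    have hlt := kb_lt k hk m
    by_cases h : kbonacci k m + 1 < k
    · simp only [h, if_true]
      rw [show phi k m + 2 = phi k m + 1 + 1 from rfl]
      rw [cnt_succ, cnt_succ, ih]
      have h0 := kb_phi k hk m
      have h1 := kb_phi_succ k hk h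
      simp only [h0, h1]
      simp only [show ¬((0:ℕ) = j + 1) from by omega, if_false, add_zero]
      by_cases he : kbonacci k m = j <;> simp [he]
    · -- kbonacci k m = k - 1 here, and j ≠ k - 1
      have hm : kbonacci k m = k - 1 := by omega
      simp only [h, if_false]
      rw [cnt_succ, ih]
      have h0 := kb_phi k hk m
      simp only [h0, hm]
      simp only [show ¬((0:ℕ) = j + 1) from by omega, if_false, add_zero]
      simp [show ¬(k - 1 = j) from fun hh => hj hh.symm]

theorem phi_cnt (k : ℕ) (hk : 3 ≤ k) (m : ℕ) :
    phi k m + cnt k (k - 1) m = 2 * m := by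
  induction m with
  | zero => simp [phi_zero, cnt]
  | succ m ih =>
    rw [phi_succ, cnt_succ]
    have hlt := kb_lt k hk m
    by_cases h : kbonacci k m + 1 < k
    · have hne : ¬ (kbonacci k m = k - 1) := by omega
      rw [if_pos h, if_neg hne]
      omega
    · have heq : kbonacci k m = k - 1 := by omega
      rw [if_neg h, if_pos heq]
      omega

theorem phi_ge (k : ℕ) (hk : 3 ≤ k) (m : ℕ) : m ≤ phi k m := by
  have h1 := phi_cnt k hk m
  have h2 : cnt k (k-1) m ≤ m := cnt_le k _ m
  omega


/-- the 0-based position of the (n+1)-st occurrence of letter j -/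
noncomputable abbrev X (k j n : ℕ) : ℕ := Nat.nth (fun m => kbonacci k m = j) n

theorem inf_letter (k : ℕ) (hk : 3 ≤ k) : ∀ {j : ℕ}, j < k →
    {m | kbonacci k m = j}.Infinite := by
  intro j
  induction j with
  | zero =>
    intro _
    apply Set.infinite_of_injective_forall_mem (f := fun m : ℕ => phi k m)
      (hi := (phi_strictMono k).injective)
    intro m; exact kb_phi k hk m
  | succ j ih =>
    intro hj
    have hj' : j < k := by omega
    have hinf := ih hj'
    apply Set.infinite_of_injective_forall_mem
      (f := fun n : ℕ => phi k (Nat.nth (fun m => kbonacci k m = j) n) + 1)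
    case hi =>
      intro a b hab
      simp only at hab
      have hab2 : phi k (Nat.nth (fun m => kbonacci k m = j) a)
          = phi k (Nat.nth (fun m => kbonacci k m = j) b) := by omega
      exact (Nat.nth_injective hinf) ((phi_strictMono k).injective hab2)
    case hf =>
      intro n
      have hXj : kbonacci k (Nat.nth (fun m => kbonacci k m = j) n) = j :=
        Nat.nth_mem_of_infinite hinf n
      have : kbonacci k (Nat.nth (fun m => kbonacci k m = j) n) + 1 < k := by omega
      have := kb_phi_succ k hk this
      simpa [hXj] using this

theorem X_zero (k : ℕ) (hk : 3 ≤ k) (n : ℕ) : X k 0 n = phi k n := by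
  have h1 : kbonacci k (phi k n) = 0 := kb_phi k hk n
  have h2 := Nat.nth_count (p := fun m => kbonacci k m = 0) h1
  rw [show Nat.count (fun m => kbonacci k m = 0) (phi k n) = n from cnt_zero_phi k hk n] at h2
  exact h2

theorem X_succ (k : ℕ) (hk : 3 ≤ k) {j : ℕ} (hj : j + 1 < k) (n : ℕ) :
    X k (j + 1) n = phi k (X k j n) + 1 := by
  have hinf : {m | kbonacci k m = j}.Infinite := inf_letter k hk (by omega)
  have hXj : kbonacci k (X k j n) = j := Nat.nth_mem_of_infinite hinf n
  have hmem : kbonacci k (phi k (X k j n) + 1) = j + 1 := by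
    have := kb_phi_succ k hk (m := X k j n) (by omega)
    rwa [hXj] at this
  have hcnt : cnt k (j + 1) (phi k (X k j n) + 1) = n := by
    rw [cnt_succ]
    rw [cnt_succ_phi k hk (by omega : j ≠ k - 1)]
    have h0 : kbonacci k (phi k (X k j n)) = 0 := kb_phi k hk _
    have : ¬ (kbonacci k (phi k (X k j n)) = j + 1) := by omega
    rw [if_neg this, add_zero]
    exact Nat.count_nth_of_infinite hinf n
  have h2 := Nat.nth_count (p := fun m => kbonacci k m = j + 1) hmem
  rw [show Nat.count (fun m => kbonacci k m = j + 1) (phi k (X k j n) + 1) = n from hcnt] at h2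
  exact h2

theorem X_mono (k : ℕ) (hk : 3 ≤ k) {j : ℕ} (hj : j + 1 < k) (n : ℕ) :
    X k j n < X k (j + 1) n := by
  rw [X_succ k hk hj n]
  have := phi_ge k hk (X k j n)
  omega


theorem Xpos_eq (k j n : ℕ) : Xpos k j (n + 1) = X k j n + 1 := by
  simp [Xpos, X]

theorem Δrow_eq (k : ℕ) (j n : ℕ) :
    Δrow k j (n + 1) = X k (j + 1) n - X k j n := by
  simp only [Δrow, Xpos_eq]
  omega

theorem dΔrow_eq (k : ℕ) (hk : 3 ≤ k) {j : ℕ} (hj : j + 2 < k) (n : ℕ) :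
    dΔrow k j (n + 1) = (X k j n + 1) - cnt k (k - 2) (X k j n) := by
  set A := X k j n with hA
  set B := X k (j + 1) n with hB
  set C := X k (j + 1 + 1) n with hC
  have h1 : B = phi k A + 1 := X_succ k hk (by omega) n
  have h2 : C = phi k B + 1 := X_succ k hk (by omega) n
  have E1 : phi k A + cnt k (k - 1) A = 2 * A := phi_cnt k hk A
  have E2 : phi k B + cnt k (k - 1) B = 2 * B := phi_cnt k hk B
  have E3 : cnt k (k - 1) B = cnt k (k - 2) A := by
    rw [h1, cnt_succ]
    have h0 : kbonacci k (phi k A) = 0 := kb_phi k hk A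
    rw [if_neg (by omega), add_zero]
    have hkk : k - 1 = (k - 2) + 1 := by omega
    rw [hkk]
    exact cnt_succ_phi k hk (by omega) A
  have hb1 : cnt k (k - 1) A ≤ A := cnt_le k _ A
  have hb2 : cnt k (k - 2) A ≤ A := cnt_le k _ A
  have goal1 : dΔrow k j (n + 1) = Δrow k (j + 1) (n + 1) - Δrow k j (n + 1) := rfl
  rw [goal1, Δrow_eq, Δrow_eq, ← hA, ← hB, ← hC]
  omega

theorem sum_tele (f : ℕ → ℕ) :
    ∀ K, (∀ i, i < K → f i ≤ f (i + 1)) →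
      f 0 ≤ f K ∧ ∑ i ∈ Finset.range K, (f (i + 1) - f i) = f K - f 0 := by
  intro K
  induction K with
  | zero => intro _; simp
  | succ K ih =>
    intro h
    obtain ⟨h1, h2⟩ := ih (fun i hi => h i (by omega))
    have h3 := h K (by omega)
    constructor
    · omega
    · rw [Finset.sum_range_succ, h2]
      omega

theorem sumRow_eq (k : ℕ) (hk : 3 ≤ k) (n : ℕ) :
    X k 0 n ≤ X k (k - 1) n ∧ sumRow k (n + 1) = X k (k - 1) n - X k 0 n := by
  have hmono : ∀ i, i < k - 1 → X k i n ≤ X k (i + 1) n := by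
    intro i hi
    exact le_of_lt (X_mono k hk (by omega) n)
  obtain ⟨h1, h2⟩ := sum_tele (fun i => X k i n) (k - 1) hmono
  refine ⟨h1, ?_⟩
  rw [sumRow]
  calc ∑ j ∈ Finset.range (k - 1), Δrow k j (n + 1)
      = ∑ j ∈ Finset.range (k - 1), (X k (j + 1) n - X k j n) := by
        apply Finset.sum_congr rfl
        intro j _
        exact Δrow_eq k j n
    _ = X k (k - 1) n - X k 0 n := h2

theorem cnt_chain (k : ℕ) (hk : 3 ≤ k) (n : ℕ) :
    ∀ l, l ≤ k - 2 → cnt k l (X k (l + 1) n) = X k 0 n + 1 := by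
  intro l
  induction l with
  | zero =>
    intro _
    have h1 : X k 1 n = phi k (X k 0 n) + 1 := X_succ k hk (by omega) n
    rw [show (1:ℕ) = 0 + 1 from rfl, h1, cnt_succ]
    rw [show cnt k 0 (phi k (X k 0 n)) = X k 0 n from cnt_zero_phi k hk _]
    rw [if_pos (kb_phi k hk _)]
  | succ l ih =>
    intro hl
    have h1 : X k (l + 1 + 1) n = phi k (X k (l + 1) n) + 1 := X_succ k hk (by omega) n
    rw [h1, cnt_succ]
    rw [cnt_succ_phi k hk (by omega : l ≠ k - 1)]
    rw [if_neg (by have := kb_phi k hk (X k (l+1) n); omega), add_zero]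
    exact ih (by omega)

theorem sumRow_val (k : ℕ) (hk : 3 ≤ k) (n : ℕ) :
    sumRow k (n + 1) = (X k (k - 1) n + 1) - cnt k (k - 2) (X k (k - 1) n) := by
  obtain ⟨h1, h2⟩ := sumRow_eq k hk n
  have h3 : cnt k (k - 2) (X k (k - 1) n) = X k 0 n + 1 := by
    have := cnt_chain k hk n (k - 2) (le_refl _)
    rwa [show k - 2 + 1 = k - 1 from by omega] at this
  omega


/-- count of positions with letter ≠ k-2 -/
noncomputable abbrev cq (k m : ℕ) : ℕ := Nat.count (fun i => kbonacci k i ≠ k - 2) m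

theorem cq_succ (k m : ℕ) :
    cq k (m + 1) = cq k m + if kbonacci k m ≠ k - 2 then 1 else 0 :=
  Nat.count_succ _ _

theorem cq_add_cnt (k m : ℕ) : cq k m + cnt k (k - 2) m = m := by
  induction m with
  | zero => simp [cnt]
  | succ m ih =>
    rw [cq_succ, cnt_succ]
    by_cases h : kbonacci k m = k - 2
    · rw [if_pos h, if_neg (by simpa using h)]; omega
    · rw [if_neg h, if_pos h]; omega

theorem q_inf (k : ℕ) (hk : 3 ≤ k) : {i | kbonacci k i ≠ k - 2}.Infinite := by
  apply Set.infinite_of_injective_forall_mem (f := fun m : ℕ => phi k m)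
    (hi := (phi_strictMono k).injective)
  intro m
  have := kb_phi k hk m
  simp only [Set.mem_setOf_eq, this]
  omega

theorem val_eq (k : ℕ) {m : ℕ} (hm : kbonacci k m ≠ k - 2) :
    (m + 1) - cnt k (k - 2) m = cq k (m + 1) := by
  have h1 := cq_add_cnt k m
  rw [cq_succ, if_pos hm]
  omega

theorem cq_pos (k : ℕ) (hk : 3 ≤ k) (m : ℕ) : 1 ≤ cq k (m + 1) := by
  have h0 : kbonacci k 0 ≠ k - 2 := by
    rw [kb_zero k hk]; omega
  have h1 : cq k 1 = 1 := by
    rw [show (1:ℕ) = 0 + 1 from rfl, cq_succ, if_pos h0]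
    simp
  have hmono : cq k 1 ≤ cq k (m + 1) := Nat.count_monotone _ (by omega)
  omega

theorem cq_inj (k : ℕ) {a b : ℕ} (ha : kbonacci k a ≠ k - 2)
    (hb : kbonacci k b ≠ k - 2) (h : cq k (a + 1) = cq k (b + 1)) : a = b := by
  rw [cq_succ, cq_succ, if_pos ha, if_pos hb] at h
  have h2 : cq k a = cq k b := by omega
  exact Nat.count_injective (p := fun i => kbonacci k i ≠ k - 2) ha hb h2

theorem mem_D_iff (k : ℕ) (hk : 3 ≤ k) {j : ℕ} (hj : j < k - 2) (v : ℕ) :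
    (∃ n, 1 ≤ n ∧ dΔrow k j n = v) ↔
      ∃ a, kbonacci k a = j ∧ cq k (a + 1) = v := by
  constructor
  · rintro ⟨n, hn, hv⟩
    obtain ⟨n', rfl⟩ : ∃ n', n = n' + 1 := ⟨n - 1, by omega⟩
    have hA : kbonacci k (X k j n') = j :=
      Nat.nth_mem_of_infinite (inf_letter k hk (by omega)) n'
    refine ⟨X k j n', hA, ?_⟩
    rw [← val_eq k (by omega : kbonacci k (X k j n') ≠ k - 2)]
    rw [← dΔrow_eq k hk (by omega : j + 2 < k) n']
    exact hv
  · rintro ⟨a, ha, hv⟩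
    refine ⟨Nat.count (fun i => kbonacci k i = j) a + 1, by omega, ?_⟩
    have hXa : X k j (Nat.count (fun i => kbonacci k i = j) a) = a :=
      Nat.nth_count ha
    rw [dΔrow_eq k hk (by omega : j + 2 < k), hXa, val_eq k (by omega : kbonacci k a ≠ k - 2)]
    exact hv

theorem mem_S_iff (k : ℕ) (hk : 3 ≤ k) (v : ℕ) :
    (∃ n, 1 ≤ n ∧ sumRow k n = v) ↔
      ∃ a, kbonacci k a = k - 1 ∧ cq k (a + 1) = v := by
  constructor
  · rintro ⟨n, hn, hv⟩
    obtain ⟨n', rfl⟩ : ∃ n', n = n' + 1 := ⟨n - 1, by omega⟩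
    have hA : kbonacci k (X k (k - 1) n') = k - 1 :=
      Nat.nth_mem_of_infinite (inf_letter k hk (by omega)) n'
    refine ⟨X k (k - 1) n', hA, ?_⟩
    rw [← val_eq k (by omega : kbonacci k (X k (k - 1) n') ≠ k - 2)]
    rw [← sumRow_val k hk n']
    exact hv
  · rintro ⟨a, ha, hv⟩
    refine ⟨Nat.count (fun i => kbonacci k i = k - 1) a + 1, by omega, ?_⟩
    have hXa : X k (k - 1) (Nat.count (fun i => kbonacci k i = k - 1) a) = a :=
      Nat.nth_count ha
    rw [sumRow_val k hk, hXa, val_eq k (by omega : kbonacci k a ≠ k - 2)]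
    exact hv

end KB

/-- The value sets of dΔ^0, …, dΔ^{k−3} together with the value set of Σ form a
partition of the positive integers (k ≥ 3). -/
theorem double_difference_partition (k : ℕ) (hk : 3 ≤ k) :
    ((⋃ j ∈ Set.Iio (k - 2), {m | ∃ n, 1 ≤ n ∧ dΔrow k j n = m}) ∪
      {m | ∃ n, 1 ≤ n ∧ sumRow k n = m} = {m : ℕ | 0 < m}) ∧
    (∀ i < k - 2, ∀ j < k - 2, i ≠ j →
      Disjoint {m | ∃ n, 1 ≤ n ∧ dΔrow k i n = m}
               {m | ∃ n, 1 ≤ n ∧ dΔrow k j n = m}) ∧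
    (∀ j < k - 2,
      Disjoint {m | ∃ n, 1 ≤ n ∧ dΔrow k j n = m}
               {m | ∃ n, 1 ≤ n ∧ sumRow k n = m}) := by
  refine ⟨?_, ?_, ?_⟩
  · apply Set.eq_of_subset_of_subset
    · intro v hv
      simp only [Set.mem_union, Set.mem_iUnion, Set.mem_setOf_eq, Set.mem_Iio] at hv
      rcases hv with ⟨j, hj, hvj⟩ | hvs
      · obtain ⟨a, _, hcq⟩ := (KB.mem_D_iff k hk hj v).mp hvj
        have := KB.cq_pos k hk a
        simp only [Set.mem_setOf_eq]
        omega
      · obtain ⟨a, _, hcq⟩ := (KB.mem_S_iff k hk v).mp hvs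
        have := KB.cq_pos k hk a
        simp only [Set.mem_setOf_eq]
        omega
    · intro v hv
      simp only [Set.mem_setOf_eq] at hv
      set q := fun i => kbonacci k i ≠ k - 2 with hq
      set a := Nat.nth q (v - 1) with haa
      have hqa : kbonacci k a ≠ k - 2 := Nat.nth_mem_of_infinite (KB.q_inf k hk) (v - 1)
      have hcnt : Nat.count q a = v - 1 := Nat.count_nth_of_infinite (KB.q_inf k hk) (v - 1)
      have hcq : KB.cq k (a + 1) = v := by
        rw [KB.cq_succ, if_pos hqa]
        have : KB.cq k a = v - 1 := hcnt
        omega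
      have hlt : kbonacci k a < k := KB.kb_lt k hk a
      by_cases hcase : kbonacci k a = k - 1
      · apply Set.mem_union_right
        exact (KB.mem_S_iff k hk v).mpr ⟨a, hcase, hcq⟩
      · have hj : kbonacci k a < k - 2 := by omega
        apply Set.mem_union_left
        simp only [Set.mem_iUnion, Set.mem_Iio]
        exact ⟨kbonacci k a, hj, (KB.mem_D_iff k hk hj v).mpr ⟨a, rfl, hcq⟩⟩
  · intro i hi j hj hij
    rw [Set.disjoint_left]
    intro v hvi hvj
    obtain ⟨a, ha, hca⟩ := (KB.mem_D_iff k hk hi v).mp hvi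
    obtain ⟨b, hb, hcb⟩ := (KB.mem_D_iff k hk hj v).mp hvj
    have hab : a = b := KB.cq_inj k (by omega) (by omega) (by omega)
    exact hij (by rw [← ha, ← hb, hab])
  · intro j hj
    rw [Set.disjoint_left]
    intro v hvj hvs
    obtain ⟨a, ha, hca⟩ := (KB.mem_D_iff k hk hj v).mp hvj
    obtain ⟨b, hb, hcb⟩ := (KB.mem_S_iff k hk v).mp hvs
    have hab : a = b := KB.cq_inj k (by omega) (by omega) (by omega)
    rw [hab] at ha
    omega
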